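/- The map φ_n extends to a bounded linear operator C_n(T,ℝ) → A_n(T,ℝ) with respect to the ℓ¹-quotient norms, of operator norm at most (n+1)(n+2)/2. -/

import Mathlib

/-!
Common definitions: trees are modelled as simple graphs `G` on a vertex type `V`
satisfying `G.IsTree`; `Seg G a b` is the geodesic segment `[a,b]` (the set of
vertices lying on the geodesic from `a` to `b`); `Aligned` tuples are those
contained in some geodesic segment; `AltChain V R n` is the module `C_n(T,R)` of
alternating `n`-chains; `chainOf x` is the class of a tuple; `alignedSub G R n`
is `A_n(T,R)`; `cnorm` is the ℓ¹-quotient norm.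
-/

open Finsupp

variable {V : Type*}

/-- The geodesic segment `[a,b]`: the set of vertices on the geodesic from `a` to `b`. -/
def Seg (G : SimpleGraph V) (a b : V) : Set V :=
  {v | G.dist a v + G.dist v b = G.dist a b}

/-- A tuple of vertices is aligned if its coordinates are contained in some geodesic
segment. -/
def Aligned (G : SimpleGraph V) {n : ℕ} (x : Fin n → V) : Prop :=
  ∃ a b : V, ∀ k, x k ∈ Seg G a b

/-- `proj a b` is the nearest-point projection onto the segment `[a,b]`. -/
def IsProj (G : SimpleGraph V) (proj : V → V → V → V) : Prop :=
  ∀ a b v : V, proj a b v ∈ Seg G a b ∧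
    ∀ w ∈ Seg G a b, G.dist v (proj a b v) ≤ G.dist v w

/-- The submodule of relations defining alternating chains: each tuple is identified
with `sgn σ` times its permutation by `σ`. -/
noncomputable def altRel (V : Type*) (R : Type*) [CommRing R] (n : ℕ) :
    Submodule R ((Fin (n + 1) → V) →₀ R) :=
  Submodule.span R {f | ∃ (x : Fin (n + 1) → V) (σ : Equiv.Perm (Fin (n + 1))),
    f = Finsupp.single x 1 - ((Equiv.Perm.sign σ : ℤ) : R) • Finsupp.single (x ∘ σ) 1}

/-- The module `C_n(T,R)` of alternating `n`-chains. -/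
abbrev AltChain (V : Type*) (R : Type*) [CommRing R] (n : ℕ) :=
  ((Fin (n + 1) → V) →₀ R) ⧸ altRel V R n

/-- The alternating chain determined by an `(n+1)`-tuple. -/
noncomputable def chainOf {R : Type*} [CommRing R] {n : ℕ} (x : Fin (n + 1) → V) :
    AltChain V R n :=
  Submodule.Quotient.mk (Finsupp.single x 1)

/-- The submodule `A_n(T,R)` of aligned chains, spanned by aligned tuples. -/
noncomputable def alignedSub (G : SimpleGraph V) (R : Type*) [CommRing R] (n : ℕ) :
    Submodule R (AltChain V R n) :=
  Submodule.span R {c | ∃ x : Fin (n + 1) → V, Aligned G x ∧ c = chainOf x}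

/-- The map `φₙ` on tuples: `φₙ(x) = ∑_{i ≤ j} p_{i,j}^x(x)`, where `p_{i,j}^x` is the
nearest-point projection onto `[xᵢ,xⱼ]` applied coordinatewise. -/
noncomputable def phiTuple {R : Type*} [CommRing R] {n : ℕ} (proj : V → V → V → V)
    (x : Fin (n + 1) → V) : AltChain V R n :=
  ∑ i : Fin (n + 1), ∑ j : Fin (n + 1),
    if i ≤ j then chainOf (fun k => proj (x i) (x j) (x k)) else 0

/-- The quotient norm on real alternating chains induced by the ℓ¹-norm. -/
noncomputable def cnorm {n : ℕ} (c : AltChain V ℝ n) : ℝ :=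
  sInf {r : ℝ | ∃ f : (Fin (n + 1) → V) →₀ ℝ,
    (Submodule.Quotient.mk f : AltChain V ℝ n) = c ∧ r = ∑ x ∈ f.support, |f x|}

/-!
Nearest-point projections onto segments of a tree are unique (the geodesic to a nearest point,
followed by the segment from it, is again a geodesic), so `p_{i,j} = p_{j,i}`. Hence the summand
of `φₙ` indexed by the pair `{i,j}` is symmetric, a permutation `σ` of the coordinates only permutes
these unordered pairs, and `φₙ(x ∘ σ) = sgn σ • φₙ(x)`: `φₙ` respects the alternating relations and
descends to chains. Each tuple goes to a sum of `(n+1)(n+2)/2` aligned tuples, so the lift of `φₙ`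
to `ℓ¹` multiplies norms by at most that number, and the bound passes to the quotient norm.
-/

namespace SimpleGraph

variable {G : SimpleGraph V} {a b u v w y : V}

theorem IsAcyclic.eq_of_isPath (hG : G.IsAcyclic) {p q : G.Walk a b} (hp : p.IsPath)
    (hq : q.IsPath) : p = q :=
  congrArg Subtype.val ((hG.subsingleton_path a b).elim ⟨p, hp⟩ ⟨q, hq⟩)

theorem IsAcyclic.length_eq_dist_of_isPath (hG : G.IsAcyclic) {p : G.Walk a b}
    (hp : p.IsPath) : p.length = G.dist a b := by
  obtain ⟨q, hq, hql⟩ := p.reachable.exists_path_of_dist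
  rwa [hG.eq_of_isPath hp hq]

theorem IsAcyclic.dist_add_dist_of_mem_support (hG : G.IsAcyclic) {p : G.Walk a b}
    (hp : p.IsPath) (hv : v ∈ p.support) : G.dist a v + G.dist v b = G.dist a b := by
  classical
  rw [← hG.length_eq_dist_of_isPath (hp.takeUntil hv),
    ← hG.length_eq_dist_of_isPath (hp.dropUntil hv), ← Walk.length_append, p.take_spec hv,
    hG.length_eq_dist_of_isPath hp]

theorem IsTree.mem_seg_iff_mem_support (hT : G.IsTree) {p : G.Walk a b} (hp : p.IsPath) :
    v ∈ Seg G a b ↔ v ∈ p.support := by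
  refine ⟨fun hv => ?_, hT.isAcyclic.dist_add_dist_of_mem_support hp⟩
  obtain ⟨q, -, hq⟩ := hT.connected.exists_path_of_dist a v
  obtain ⟨r, -, hr⟩ := hT.connected.exists_path_of_dist v b
  have hqr : (q.append r).IsPath :=
    (q.append r).isPath_of_length_eq_dist (by rw [Walk.length_append, hq, hr]; exact hv)
  rw [← hT.isAcyclic.eq_of_isPath hqr hp, Walk.mem_support_append_iff]
  exact Or.inl q.end_mem_support

theorem seg_comm : Seg G b a = Seg G a b := by
  ext v
  have := G.dist_comm (u := a) (v := b)
  have := G.dist_comm (u := a) (v := v)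
  have := G.dist_comm (u := v) (v := b)
  change _ + _ = _ ↔ _ + _ = _
  omega

theorem IsTree.seg_subset_seg (hT : G.IsTree) (hu : u ∈ Seg G a b) (hw : w ∈ Seg G a b) :
    Seg G u w ⊆ Seg G a b := by
  classical
  obtain ⟨p, hp, -⟩ := hT.connected.exists_path_of_dist a b
  intro y hy
  rw [hT.mem_seg_iff_mem_support hp] at hu hw ⊢
  let W := (p.takeUntil u hu).reverse.append (p.takeUntil w hw)
  rw [hT.mem_seg_iff_mem_support W.bypass_isPath] at hy
  rcases (Walk.mem_support_append_iff _ _).1 (W.support_bypass_subset_support hy) with hy | hy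
  · exact p.support_takeUntil_subset_support hu (by simpa using hy)
  · exact p.support_takeUntil_subset_support hw hy

theorem IsTree.dist_add_dist_of_isNearest (hT : G.IsTree) (hw : w ∈ Seg G a b)
    (hmin : ∀ u ∈ Seg G a b, G.dist v w ≤ G.dist v u) (hy : y ∈ Seg G a b) :
    G.dist v w + G.dist w y = G.dist v y := by
  obtain ⟨q, hq, hql⟩ := hT.connected.exists_path_of_dist v w
  obtain ⟨s, hs, hsl⟩ := hT.connected.exists_path_of_dist w y
  have hqs : (q.append s).IsPath := by
    rw [Walk.isPath_def, Walk.support_append]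
    refine hq.support_nodup.append (hs.support_nodup.sublist s.support.tail_sublist) ?_
    intro u huq hus
    have hu : u ∈ Seg G a b := hT.seg_subset_seg hw hy
      ((hT.mem_seg_iff_mem_support hs).2 (List.mem_of_mem_tail hus))
    have hsplit := hT.isAcyclic.dist_add_dist_of_mem_support hq huq
    have huw : u = w := hT.connected.dist_eq_zero_iff.1 (by have := hmin u hu; omega)
    subst huw
    have hnodup := hs.support_nodup
    rw [← s.cons_tail_support, List.nodup_cons] at hnodup
    exact hnodup.1 hus
  rw [← hql, ← hsl, ← Walk.length_append, hT.isAcyclic.length_eq_dist_of_isPath hqs]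

theorem IsTree.eq_of_isNearest (hT : G.IsTree) (hu : u ∈ Seg G a b) (hw : w ∈ Seg G a b)
    (hmin_u : ∀ y ∈ Seg G a b, G.dist v u ≤ G.dist v y)
    (hmin_w : ∀ y ∈ Seg G a b, G.dist v w ≤ G.dist v y) : u = w := by
  have hgate := hT.dist_add_dist_of_isNearest hu hmin_u hw
  have hle := hmin_w u hu
  exact hT.connected.dist_eq_zero_iff.1 (by omega)

end SimpleGraph

theorem IsProj.symm {G : SimpleGraph V} (hT : G.IsTree) {proj : V → V → V → V}
    (hproj : IsProj G proj) (a b v : V) : proj a b v = proj b a v := by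
  obtain ⟨hab, hmin_ab⟩ := hproj a b v
  obtain ⟨hba, hmin_ba⟩ := hproj b a v
  rw [SimpleGraph.seg_comm] at hba hmin_ba
  exact hT.eq_of_isNearest hab hba hmin_ab hmin_ba

section PairSums

variable {α M : Type*} [LinearOrder α] [Fintype α] [AddCommMonoid M]

theorem sum_sum_ite_le_eq_sum_sym2 (F : α → α → M) (hF : ∀ i j, F i j = F j i) :
    ∑ i, ∑ j, (if i ≤ j then F i j else 0) = ∑ z : Sym2 α, Sym2.lift ⟨F, hF⟩ z := by
  rw [← Fintype.sum_prod_type', ← Finset.sum_filter, ← Finset.sum_subtype_eq_sum_filter]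
  exact Finset.sum_equiv Sym2.sortEquiv.symm (by simp) fun p _ => by simp [Sym2.sortEquiv]

theorem sum_sum_ite_le_comp_perm (F : α → α → M) (hF : ∀ i j, F i j = F j i)
    (σ : Equiv.Perm α) :
    ∑ i, ∑ j, (if i ≤ j then F (σ i) (σ j) else 0) = ∑ i, ∑ j, if i ≤ j then F i j else 0 := by
  rw [sum_sum_ite_le_eq_sum_sym2 _ fun i j => hF _ _, sum_sum_ite_le_eq_sum_sym2 F hF]
  refine Fintype.sum_bijective (Sym2.map σ)
    (Finite.injective_iff_bijective.1 (Sym2.map.injective σ.injective)) _ _ fun z => ?_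
  induction z using Sym2.ind
  simp

theorem sum_sum_ite_le_one_eq (m : ℕ) :
    ∑ i : Fin m, ∑ j : Fin m, (if i ≤ j then (1 : ℝ) else 0) = m * (m + 1) / 2 := by
  rw [sum_sum_ite_le_eq_sum_sym2 _ fun _ _ => rfl]
  have : ∀ z : Sym2 (Fin m), Sym2.lift ⟨fun _ _ => (1 : ℝ), fun _ _ => rfl⟩ z = 1 := by
    intro z; induction z using Sym2.ind; simp
  simp only [this, Finset.sum_const, Finset.card_univ, Sym2.card, Fintype.card_fin, nsmul_eq_mul,
    mul_one, Nat.cast_choose_two]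
  push_cast; ring

end PairSums

section L1

variable {α : Type*}

noncomputable def l1Norm (f : α →₀ ℝ) : ℝ := ∑ x ∈ f.support, |f x|

theorem l1Norm_eq_sum_of_support_subset (f : α →₀ ℝ) {s : Finset α} (hs : f.support ⊆ s) :
    l1Norm f = ∑ x ∈ s, |f x| :=
  Finset.sum_subset hs fun x _ hx => by rw [Finsupp.notMem_support_iff.mp hx, abs_zero]

theorem l1Norm_zero : l1Norm (0 : α →₀ ℝ) = 0 := by
  simp [l1Norm]

theorem l1Norm_nonneg (f : α →₀ ℝ) : 0 ≤ l1Norm f :=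
  Finset.sum_nonneg fun _ _ => abs_nonneg _

theorem l1Norm_single (x : α) (r : ℝ) : l1Norm (Finsupp.single x r) = |r| := by
  classical
  rw [l1Norm_eq_sum_of_support_subset _ Finsupp.support_single_subset, Finset.sum_singleton,
    Finsupp.single_eq_same]

theorem l1Norm_add_le (f g : α →₀ ℝ) : l1Norm (f + g) ≤ l1Norm f + l1Norm g := by
  classical
  rw [l1Norm_eq_sum_of_support_subset (f + g) Finsupp.support_add,
    l1Norm_eq_sum_of_support_subset f Finset.subset_union_left,
    l1Norm_eq_sum_of_support_subset g Finset.subset_union_right, ← Finset.sum_add_distrib]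
  exact Finset.sum_le_sum fun x _ => abs_add_le _ _

theorem l1Norm_sum_le {ι : Type*} (s : Finset ι) (f : ι → α →₀ ℝ) :
    l1Norm (∑ i ∈ s, f i) ≤ ∑ i ∈ s, l1Norm (f i) :=
  Finset.le_sum_of_subadditive _ l1Norm_zero.le l1Norm_add_le s f

theorem l1Norm_smul_le (r : ℝ) (f : α →₀ ℝ) : l1Norm (r • f) ≤ |r| * l1Norm f := by
  rw [l1Norm_eq_sum_of_support_subset (r • f) Finsupp.support_smul, l1Norm, Finset.mul_sum]
  simp only [Finsupp.smul_apply, smul_eq_mul, abs_mul, le_refl]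

theorem l1Norm_linearCombination_le {β : Type*} {v : α → β →₀ ℝ} {K : ℝ}
    (hv : ∀ x, l1Norm (v x) ≤ K) (f : α →₀ ℝ) :
    l1Norm (Finsupp.linearCombination ℝ v f) ≤ K * l1Norm f := by
  rw [Finsupp.linearCombination_apply, Finsupp.sum]
  calc _ ≤ ∑ x ∈ f.support, l1Norm (f x • v x) := l1Norm_sum_le _ _
    _ ≤ ∑ x ∈ f.support, K * |f x| := Finset.sum_le_sum fun x _ =>
        (l1Norm_smul_le _ _).trans_eq (mul_comm _ _) |>.trans
          (mul_le_mul_of_nonneg_right (hv x) (abs_nonneg _))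
    _ = K * l1Norm f := (Finset.mul_sum _ _ _).symm

end L1

section Chains

variable {R : Type*} [CommRing R] {n : ℕ}

theorem chainOf_eq_sign_smul (x : Fin (n + 1) → V) (σ : Equiv.Perm (Fin (n + 1))) :
    (chainOf x : AltChain V R n) = ((Equiv.Perm.sign σ : ℤ) : R) • chainOf (x ∘ σ) := by
  have hrel : Finsupp.single x 1 - ((Equiv.Perm.sign σ : ℤ) : R) • Finsupp.single (x ∘ σ) 1
      ∈ altRel V R n := Submodule.subset_span ⟨x, σ, rfl⟩
  rwa [← Submodule.Quotient.mk_eq_zero, Submodule.Quotient.mk_sub, Submodule.Quotient.mk_smul,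
    sub_eq_zero] at hrel

theorem chainOf_comp_perm (x : Fin (n + 1) → V) (σ : Equiv.Perm (Fin (n + 1))) :
    (chainOf (x ∘ σ) : AltChain V R n) = ((Equiv.Perm.sign σ : ℤ) : R) • chainOf x := by
  simpa [Function.comp_assoc] using chainOf_eq_sign_smul (R := R) (x ∘ σ) σ⁻¹

theorem span_range_chainOf :
    Submodule.span R (Set.range (chainOf (V := V) (R := R) (n := n))) = ⊤ := by
  have : Set.range (chainOf (V := V) (R := R) (n := n)) =
      (altRel V R n).mkQ '' Set.range (Finsupp.basisSingleOne (R := R)) := by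
    rw [← Set.range_comp]; rfl
  rw [this, Submodule.span_image, Finsupp.basisSingleOne.span_eq, Submodule.map_top,
    Submodule.range_mkQ]

variable {proj : V → V → V → V}

theorem phiTuple_comp_perm (hsymm : ∀ a b v, proj a b v = proj b a v) (x : Fin (n + 1) → V)
    (σ : Equiv.Perm (Fin (n + 1))) :
    (phiTuple proj (x ∘ σ) : AltChain V R n) =
      ((Equiv.Perm.sign σ : ℤ) : R) • phiTuple proj x := by
  have hcomp : ∀ i j, (fun k => proj (x (σ i)) (x (σ j)) (x (σ k))) =
      (fun k => proj (x (σ i)) (x (σ j)) (x k)) ∘ σ := fun _ _ => rfl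
  simp only [phiTuple, Function.comp_apply, hcomp, chainOf_comp_perm, Finset.smul_sum,
    smul_ite, smul_zero]
  exact sum_sum_ite_le_comp_perm (fun i j => _ • chainOf fun k => proj (x i) (x j) (x k))
    (fun i j => by rw [funext fun k => hsymm (x i) (x j) (x k)]) σ

theorem phiTuple_mem_alignedSub {G : SimpleGraph V} (hmem : ∀ a b v, proj a b v ∈ Seg G a b)
    (x : Fin (n + 1) → V) : (phiTuple proj x : AltChain V R n) ∈ alignedSub G R n := by
  refine Submodule.sum_mem _ fun i _ => Submodule.sum_mem _ fun j _ => ?_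
  split_ifs
  · exact Submodule.subset_span ⟨_, ⟨x i, x j, fun k => hmem _ _ _⟩, rfl⟩
  · exact Submodule.zero_mem _

end Chains

section PhiMap

variable {R : Type*} [CommRing R] {n : ℕ} (proj : V → V → V → V)

noncomputable def phiFinsupp (x : Fin (n + 1) → V) : (Fin (n + 1) → V) →₀ R :=
  ∑ i : Fin (n + 1), ∑ j : Fin (n + 1),
    if i ≤ j then Finsupp.single (fun k => proj (x i) (x j) (x k)) 1 else 0

theorem mk_phiFinsupp (x : Fin (n + 1) → V) :
    (Submodule.Quotient.mk (phiFinsupp proj x) : AltChain V R n) = phiTuple proj x := by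
  simp only [phiFinsupp, phiTuple, ← Submodule.mkQ_apply, map_sum, apply_ite (altRel V R n).mkQ,
    map_zero, chainOf]

variable {proj}

theorem altRel_le_ker_phiFinsupp (hsymm : ∀ a b v, proj a b v = proj b a v) :
    altRel V R n ≤ LinearMap.ker
      ((altRel V R n).mkQ ∘ₗ Finsupp.linearCombination R (phiFinsupp proj)) := by
  refine Submodule.span_le.mpr ?_
  rintro _ ⟨x, σ, rfl⟩
  have h := phiTuple_comp_perm (R := R) hsymm (x ∘ σ) σ⁻¹
  simpa [Function.comp_assoc, Finsupp.linearCombination_single, mk_phiFinsupp, sub_eq_zero]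
    using h

noncomputable def phiMap (hsymm : ∀ a b v, proj a b v = proj b a v) :
    AltChain V R n →ₗ[R] AltChain V R n :=
  (altRel V R n).liftQ _ (altRel_le_ker_phiFinsupp hsymm)

variable (hsymm : ∀ a b v, proj a b v = proj b a v)

theorem phiMap_mk (f : (Fin (n + 1) → V) →₀ R) :
    phiMap hsymm (Submodule.Quotient.mk f) =
      Submodule.Quotient.mk (Finsupp.linearCombination R (phiFinsupp proj) f) :=
  rfl

theorem phiMap_chainOf (x : Fin (n + 1) → V) :
    phiMap hsymm (chainOf x : AltChain V R n) = phiTuple proj x := by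
  rw [chainOf, phiMap_mk, Finsupp.linearCombination_single, one_smul, mk_phiFinsupp]

theorem range_phiMap_le {G : SimpleGraph V} (hmem : ∀ a b v, proj a b v ∈ Seg G a b) :
    LinearMap.range (phiMap (R := R) (n := n) hsymm) ≤ alignedSub G R n := by
  rw [LinearMap.range_eq_map, ← span_range_chainOf, Submodule.map_span_le]
  rintro _ ⟨x, rfl⟩
  rw [phiMap_chainOf]
  exact phiTuple_mem_alignedSub hmem x

end PhiMap

section Norms

variable {n : ℕ}

theorem cnorm_mk_le (f : (Fin (n + 1) → V) →₀ ℝ) :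
    cnorm (Submodule.Quotient.mk f : AltChain V ℝ n) ≤ l1Norm f :=
  csInf_le ⟨0, by rintro _ ⟨g, -, rfl⟩; exact l1Norm_nonneg g⟩ ⟨f, rfl, rfl⟩

theorem cnorm_le_mul_of_forall_mk {c d : AltChain V ℝ n} {K : ℝ} (hK : 0 ≤ K)
    (h : ∀ f, (Submodule.Quotient.mk f : AltChain V ℝ n) = c → cnorm d ≤ K * l1Norm f) :
    cnorm d ≤ K * cnorm c := by
  obtain ⟨f₀, hf₀⟩ := Submodule.Quotient.mk_surjective _ c
  conv_rhs => rw [cnorm, ← smul_eq_mul, ← Real.sInf_smul_of_nonneg hK]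
  refine le_csInf ⟨K * l1Norm f₀, _, ⟨f₀, hf₀, rfl⟩, rfl⟩ ?_
  rintro _ ⟨_, ⟨f, hf, rfl⟩, rfl⟩
  exact h f hf

theorem l1Norm_phiFinsupp_le (proj : V → V → V → V) (x : Fin (n + 1) → V) :
    l1Norm (phiFinsupp proj x : (Fin (n + 1) → V) →₀ ℝ) ≤ (n + 1) * (n + 2) / 2 := by
  calc l1Norm (phiFinsupp proj x : (Fin (n + 1) → V) →₀ ℝ)
      ≤ ∑ i : Fin (n + 1), ∑ j : Fin (n + 1),
          l1Norm (if i ≤ j then Finsupp.single (fun k => proj (x i) (x j) (x k)) (1 : ℝ)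
            else 0) :=
        (l1Norm_sum_le _ _).trans (Finset.sum_le_sum fun i _ => l1Norm_sum_le _ _)
    _ = ∑ i : Fin (n + 1), ∑ j : Fin (n + 1), if i ≤ j then (1 : ℝ) else 0 := by
        simp only [apply_ite l1Norm, l1Norm_single, abs_one, l1Norm_zero]
    _ = (n + 1) * (n + 2) / 2 := by rw [sum_sum_ite_le_one_eq]; push_cast; ring

theorem cnorm_phiMap_le {proj : V → V → V → V} (hsymm : ∀ a b v, proj a b v = proj b a v)
    (c : AltChain V ℝ n) : cnorm (phiMap hsymm c) ≤ (n + 1) * (n + 2) / 2 * cnorm c := by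
  refine cnorm_le_mul_of_forall_mk (by positivity) fun f hf => ?_
  rw [← hf, phiMap_mk]
  exact (cnorm_mk_le _).trans (l1Norm_linearCombination_le (l1Norm_phiFinsupp_le proj) f)

end Norms

/-- The map `φ_n` extends to a bounded linear operator
`C_n(T,ℝ) → A_n(T,ℝ)` for the ℓ¹-quotient norms, of operator norm at most
`(n+1)(n+2)/2`. -/
theorem statement3 (G : SimpleGraph V) (hT : G.IsTree)
    (proj : V → V → V → V) (hproj : IsProj G proj) (n : ℕ) :
    ∃ φ : AltChain V ℝ n →ₗ[ℝ] AltChain V ℝ n,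
      (∀ x : Fin (n + 1) → V, φ (chainOf x) = phiTuple proj x) ∧
      (∀ c : AltChain V ℝ n, φ c ∈ alignedSub G ℝ n) ∧
      ∀ c : AltChain V ℝ n, cnorm (φ c) ≤ ((n + 1) * (n + 2) / 2 : ℝ) * cnorm c := by
  have hsymm := hproj.symm hT
  exact ⟨phiMap hsymm, phiMap_chainOf hsymm,
    fun c => range_phiMap_le hsymm (fun a b v => (hproj a b v).1) ⟨c, rfl⟩, cnorm_phiMap_le hsymm⟩
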